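/- Let M and D be the 4×4 matrices over ℚ(x) from the width-4 triangular lattice transfer matrix (D = diag(1/(x)₂,1/(x)₃,1/(x)₃,1/(x)₄); M as in the paper with M₁₁=(x)₄, M₁₂=M₁₃=(x)₅, M₁₄=(x)₆, M₂₂=M₂₃=M₃₃=(x)₄+2(x)₅+(x)₆, M₂₄=M₃₄=4(x)₅+4(x)₆+(x)₇, M₄₄=2(x)₄+16(x)₅+20(x)₆+8(x)₇+(x)₈, symmetric). Then the characteristic polynomial of MD (as a matrix over ℚ(x)) factors as λ·(λ−2)·q(λ) for some quadratic q ∈ ℚ(x)[λ]; in particular det(MD) = 0 and 2 is an eigenvalue of MD for every value of x where D is defined. -/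
import Mathlib



set_option synthInstance.maxHeartbeats 400000
set_option maxHeartbeats 1000000

open Finset Matrix Polynomial

/-- The falling factorial `(x)ₖ = x(x-1)⋯(x-k+1)` as an element of `ℚ(x)`. -/
noncomputable def ff (k : ℕ) : RatFunc ℚ :=
  ∏ i ∈ Finset.range k, (RatFunc.X - (i : RatFunc ℚ))

/-- The diagonal matrix `D = diag(1/(x)₂, 1/(x)₃, 1/(x)₃, 1/(x)₄)` over `ℚ(x)`. -/
noncomputable def Dmat : Matrix (Fin 4) (Fin 4) (RatFunc ℚ) :=
  Matrix.diagonal ![(ff 2)⁻¹, (ff 3)⁻¹, (ff 3)⁻¹, (ff 4)⁻¹]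

/-- The symmetric colour-transfer matrix `M` of one layer of the width-4
cylindrical triangular lattice. -/
noncomputable def Mmat : Matrix (Fin 4) (Fin 4) (RatFunc ℚ) :=
  !![ff 4, ff 5, ff 5, ff 6;
     ff 5, ff 4 + 2 * ff 5 + ff 6, ff 4 + 2 * ff 5 + ff 6, 4 * ff 5 + 4 * ff 6 + ff 7;
     ff 5, ff 4 + 2 * ff 5 + ff 6, ff 4 + 2 * ff 5 + ff 6, 4 * ff 5 + 4 * ff 6 + ff 7;
     ff 6, 4 * ff 5 + 4 * ff 6 + ff 7, 4 * ff 5 + 4 * ff 6 + ff 7,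
       2 * ff 4 + 16 * ff 5 + 20 * ff 6 + 8 * ff 7 + ff 8]

lemma ff_ne_zero (k : ℕ) : ff k ≠ 0 := by
  unfold ff
  apply Finset.prod_ne_zero_iff.mpr
  intro i _
  have h : RatFunc.X - (i : RatFunc ℚ) =
      algebraMap ℚ[X] (RatFunc ℚ) (Polynomial.X - Polynomial.C (i : ℚ)) := by
    rw [map_sub, RatFunc.algebraMap_X, RatFunc.algebraMap_C, map_natCast]
  rw [h]
  exact RatFunc.algebraMap_ne_zero (Polynomial.X_sub_C_ne_zero (i : ℚ))

lemma charpoly_eval {n : ℕ} (A : Matrix (Fin n) (Fin n) (RatFunc ℚ)) (r : RatFunc ℚ) :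
    A.charpoly.eval r = (r • (1 : Matrix (Fin n) (Fin n) (RatFunc ℚ)) - A).det := by
  have h1 : A.charpoly.eval r = (evalRingHom r) A.charpoly := rfl
  rw [h1, Matrix.charpoly, RingHom.map_det]
  congr 1
  ext i j
  by_cases h : i = j <;>
    simp [charmatrix_apply, Matrix.map_apply, Matrix.one_apply, h, Matrix.diagonal_apply]

lemma det_MD : (Mmat * Dmat).det = 0 := by
  rw [← Matrix.exists_mulVec_eq_zero_iff]
  refine ⟨![0, 1, -1, 0], ?_, ?_⟩
  · intro h
    have := congrFun h 1
    simp at this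
  · funext i
    fin_cases i <;>
      simp [Mmat, Dmat, Matrix.mulVec, dotProduct, Fin.sum_univ_four,
        Matrix.mul_diagonal]

lemma eval_two : (Mmat * Dmat).charpoly.eval 2 = 0 := by
  rw [charpoly_eval]
  rw [← Matrix.exists_mulVec_eq_zero_iff]
  refine ⟨![1, -1, -1, 1], ?_, ?_⟩
  · intro h
    have := congrFun h 0
    simp at this
  · funext i
    have h2 := ff_ne_zero 2
    have h3 := ff_ne_zero 3
    have h4 := ff_ne_zero 4
    fin_cases i <;>
    · simp only [Mmat, Dmat, Matrix.mulVec, dotProduct, Fin.sum_univ_four,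
        Matrix.sub_apply, Matrix.smul_apply, Matrix.one_apply, Matrix.mul_diagonal,
        Matrix.cons_val', Matrix.cons_val_zero, Matrix.cons_val_one, Matrix.head_cons,
        Matrix.empty_val', Matrix.cons_val_fin_one, Matrix.head_fin_const,
        Matrix.of_apply, Matrix.cons_val_two, Matrix.cons_val_three, Matrix.tail_cons,
        Matrix.diagonal_apply, Pi.zero_apply, smul_eq_mul]
      norm_num
      field_simp
      simp only [ff, Finset.prod_range_succ, Finset.prod_range_zero]
      push_cast
      ring


/-- The characteristic polynomial of the transfer matrix `MD` over `ℚ(x)` factors as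
`λ·(λ-2)·q(λ)` with `q` quadratic; in particular `det(MD) = 0` and `2` is an
eigenvalue of `MD`. -/
theorem transfer_matrix_charpoly_factors :
    (Mmat * Dmat).det = 0 ∧
    ∃ q : Polynomial (RatFunc ℚ), q.natDegree = 2 ∧
      (Mmat * Dmat).charpoly = Polynomial.X * (Polynomial.X - Polynomial.C 2) * q := by
  refine ⟨det_MD, ?_⟩
  set p := (Mmat * Dmat).charpoly with hp
  have hmon : p.Monic := (Mmat * Dmat).charpoly_monic
  have hdeg : p.natDegree = 4 := by
    rw [hp, Matrix.charpoly_natDegree_eq_dim]; simp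
  have hd0 : Polynomial.X ∣ p := by
    rw [Polynomial.X_dvd_iff, Polynomial.coeff_zero_eq_eval_zero, charpoly_eval]
    simp only [zero_smul, zero_sub, Matrix.det_neg]
    rw [det_MD]
    simp
  have hd2 : (Polynomial.X - Polynomial.C 2) ∣ p := by
    rw [Polynomial.dvd_iff_isRoot]
    exact eval_two
  have hcop : IsCoprime (Polynomial.X : Polynomial (RatFunc ℚ)) (Polynomial.X - Polynomial.C 2) := by
    have : (Polynomial.X : Polynomial (RatFunc ℚ)) = Polynomial.X - Polynomial.C 0 := by simp
    nth_rewrite 1 [this]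
    apply Polynomial.isCoprime_X_sub_C_of_isUnit_sub (a := (0:RatFunc ℚ)) (b := 2)
    rw [isUnit_iff_ne_zero, sub_ne_zero]
    intro h
    exact RatFunc.algebraMap_ne_zero (by norm_num : (2:ℚ[X]) ≠ 0)
      (by rw [map_ofNat]; exact h.symm)
  obtain ⟨q, hq⟩ := hcop.mul_dvd hd0 hd2
  refine ⟨q, ?_, by rw [hq]⟩
  have hpne : p ≠ 0 := hmon.ne_zero
  have hqne : q ≠ 0 := by rintro rfl; simp [hq] at hpne
  have h12 : (Polynomial.X * (Polynomial.X - Polynomial.C 2) : Polynomial (RatFunc ℚ)).natDegree = 2 := by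
    rw [Polynomial.natDegree_mul Polynomial.X_ne_zero (Polynomial.X_sub_C_ne_zero 2)]
    simp
  have := hdeg
  rw [hq, Polynomial.natDegree_mul (mul_ne_zero Polynomial.X_ne_zero (Polynomial.X_sub_C_ne_zero 2)) hqne, h12] at this
  omega
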